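/- arXiv:2207.06979 — 2 statements merged into one kernel-verified Lean document; each statement's English description precedes it below -/
import Mathlib

section
/- Let C', c_β > 1 and let F : (0,∞) → [0,∞) satisfy F(t) ≤ C' F(t − c_β s)/s for all s, t with 1 ≤ s ≤ t/c_β, and F(t) ≤ 1/t for every t > 0. Then F(t) ≤ C exp(−c t) for every t ≥ c_β, where C := exp(1/(C'e) + 1) and c := 1/(C' c_β e). -/
open Set MeasureTheory ENNReal NNReal Filter

noncomputable section

/-- `ℝ^d` with the Euclidean metric. -/
abbrev Euc (d : ℕ) : Type := EuclideanSpace ℝ (Fin d)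

/-- An axis-parallel cube in `ℝ^d`, given by its lower corner and (positive) side length. -/
structure Cube (d : ℕ) where
  corner : Fin d → ℝ
  side : ℝ
  side_pos : 0 < side

namespace Cube

/-- The (half-open) set of points of the cube. -/
def set {d : ℕ} (Q : Cube d) : Set (Euc d) :=
  {x : Euc d | ∀ i, Q.corner i ≤ x i ∧ x i < Q.corner i + Q.side}

/-- The dyadic lattice `𝓓(Q)` generated by `Q`: all cubes of side `l(Q)·2ⁿ` (`n : ℤ`) with
corners on the correspondingly rescaled grid anchored at the corner of `Q`; equivalently `Q`,
its dyadic ancestors, and all of their repeated dyadic subdivisions. -/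
def dyadic {d : ℕ} (Q : Cube d) : Set (Cube d) :=
  {Q' | ∃ (n : ℤ) (k : Fin d → ℤ), Q'.side = Q.side * 2 ^ n ∧
    ∀ i, Q'.corner i = Q.corner i + (k i : ℝ) * (Q.side * 2 ^ n)}

end Cube

/-- The spherical Hausdorff content `𝓗^β_∞`, with `ω_β = π^{β/2}/Γ(β/2+1)`. -/
def hausdorffContent (d : ℕ) (β : ℝ) (E : Set (Euc d)) : ℝ≥0∞ :=
  ⨅ (c : ℕ → Euc d × ℝ) (_ : E ⊆ ⋃ i, Metric.ball (c i).1 (c i).2),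
    ∑' i, ENNReal.ofReal (Real.pi ^ (β / 2) / Real.Gamma (β / 2 + 1) * (c i).2 ^ β)

/-- The dyadic Hausdorff content `𝓗^{β,Q}_∞` adapted to the cube `Q`. -/
def dyadicContent (d : ℕ) (β : ℝ) (Q : Cube d) (E : Set (Euc d)) : ℝ≥0∞ :=
  ⨅ (c : ℕ → Cube d) (_ : ∀ i, c i ∈ Q.dyadic) (_ : E ⊆ ⋃ i, (c i).set),
    ∑' i, ENNReal.ofReal ((c i).side ^ β)

/-- The Choquet integral `∫_A f dH := ∫_0^∞ H({x ∈ A : f x > t}) dt`. -/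
def choquetIntegral {X : Type*} (H : Set X → ℝ≥0∞) (A : Set X) (f : X → ℝ) : ℝ≥0∞ :=
  ∫⁻ t in Set.Ioi (0 : ℝ), H {x | x ∈ A ∧ t < f x}

/-- `f` is `H`-quasicontinuous: for every `ε > 0` there is an open set `O` with `H O < ε`
such that `f` restricted to `Oᶜ` is continuous. -/
def QuasiContinuous {X : Type*} [TopologicalSpace X] (H : Set X → ℝ≥0∞) (f : X → ℝ) : Prop :=
  ∀ ε : ℝ, 0 < ε → ∃ O : Set X, IsOpen O ∧ H O < ENNReal.ofReal ε ∧ ContinuousOn f Oᶜ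

/-- `f ∈ L¹(A; H)`: `f` is `H`-quasicontinuous and `∫_A |f| dH < ∞`. -/
def MemChoquetL1 {X : Type*} [TopologicalSpace X] (H : Set X → ℝ≥0∞) (A : Set X)
    (f : X → ℝ) : Prop :=
  QuasiContinuous H f ∧ choquetIntegral H A (fun x => |f x|) < ⊤

/-- The `BMO^β(Q₀)` seminorm: `sup_{Q ⊆ Q₀} inf_{c ∈ ℝ} l(Q)^{-β} ∫_Q |u - c| d𝓗^β_∞`. -/
def bmoSeminorm (d : ℕ) (β : ℝ) (Q₀ : Set (Euc d)) (u : Euc d → ℝ) : ℝ≥0∞ :=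
  ⨆ (Q : Cube d) (_ : Q.set ⊆ Q₀),
    ⨅ c : ℝ, choquetIntegral (hausdorffContent d β) Q.set (fun x => |u x - c|) /
      ENNReal.ofReal (Q.side ^ β)

/-- Membership in `BMO^β(Q₀)`. -/
def MemBMO (d : ℕ) (β : ℝ) (Q₀ : Set (Euc d)) (u : Euc d → ℝ) : Prop :=
  MemChoquetL1 (hausdorffContent d β) Q₀ u ∧ bmoSeminorm d β Q₀ u < ⊤


/-- The classical John–Nirenberg BMO seminorm on `Q₀` with respect to Lebesgue measure. -/
def bmoClassical (d : ℕ) (Q₀ : Set (Euc d)) (u : Euc d → ℝ) : ℝ≥0∞ :=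
  ⨆ (Q : Cube d) (_ : Q.set ⊆ Q₀),
    (volume Q.set)⁻¹ * ∫⁻ x in Q.set, ENNReal.ofReal |u x - ⨍ y in Q.set, u y|

/-- The axis-parallel affine subspace of `ℝ^d` obtained by freeing the coordinates in `S`
and fixing the remaining coordinates to the values of `b`. -/
def hyperplane (d : ℕ) (S : Finset (Fin d)) (b : Fin d → ℝ) : Set (Euc d) :=
  {x : Euc d | ∀ i ∉ S, x i = b i}

/-- The classical BMO seminorm of `u` on `Q₀ ∩ H` with respect to the `k`-dimensional
Hausdorff measure `𝓗^k`, the supremum being over the subcubes `Q.set ∩ H ⊆ Q₀ ∩ H`. -/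
def bmoClassicalOnPlane (d k : ℕ) (Q₀ : Cube d) (H : Set (Euc d)) (u : Euc d → ℝ) : ℝ≥0∞ :=
  ⨆ (Q : Cube d) (_ : Q.set ∩ H ⊆ Q₀.set),
    (Measure.hausdorffMeasure (k : ℝ) (Q.set ∩ H))⁻¹ *
      ∫⁻ x in Q.set ∩ H,
        ENNReal.ofReal |u x - ⨍ y in Q.set ∩ H, u y ∂(Measure.hausdorffMeasure (k : ℝ))|
          ∂(Measure.hausdorffMeasure (k : ℝ))

/-- The unique dyadic cube of `𝓓(Q)` of generation `n` (side `l(Q)·2^{-n}`) containing `x`. -/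
def dyadicCubeAt {d : ℕ} (Q : Cube d) (n : ℕ) (x : Euc d) : Cube d where
  corner := fun i => Q.corner i + Q.side * (2 : ℝ)⁻¹ ^ n *
    (⌊(x i - Q.corner i) / (Q.side * (2 : ℝ)⁻¹ ^ n)⌋ : ℝ)
  side := Q.side * (2 : ℝ)⁻¹ ^ n
  side_pos := by have := Q.side_pos; positivity

/-- The dyadic `β`-Hausdorff maximal function associated to `𝓗^{β,Q}_∞`. -/
def dyadicMaximal (d : ℕ) (β : ℝ) (Q : Cube d) (f : Euc d → ℝ) (x : Euc d) : ℝ≥0∞ :=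
  ⨆ (Q' : Cube d) (_ : Q' ∈ Q.dyadic) (_ : x ∈ Q'.set),
    choquetIntegral (dyadicContent d β Q) Q'.set (fun y => |f y|) / ENNReal.ofReal (Q'.side ^ β)

/-- The `BMO^{β,p}(Q₀)` seminorm. -/
def bmoSeminormP (d : ℕ) (β p : ℝ) (Q₀ : Set (Euc d)) (u : Euc d → ℝ) : ℝ≥0∞ :=
  ⨆ (Q : Cube d) (_ : Q.set ⊆ Q₀),
    ⨅ c : ℝ, (choquetIntegral (hausdorffContent d β) Q.set (fun x => |u x - c| ^ p) /
      ENNReal.ofReal (Q.side ^ β)) ^ (1 / p)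

/-- The standard normalization constant `γ(α) = π^{d/2} 2^α Γ(α/2) / Γ((d-α)/2)`. -/
def rieszConst (d : ℕ) (α : ℝ) : ℝ :=
  Real.pi ^ ((d : ℝ) / 2) * 2 ^ α * Real.Gamma (α / 2) / Real.Gamma (((d : ℝ) - α) / 2)

/-- The Riesz potential `I_α μ (x) = γ(α)⁻¹ ∫ |x - y|^{α - d} dμ(y)`. -/
def rieszPotential (d : ℕ) (α : ℝ) (μ : Measure (Euc d)) (x : Euc d) : ℝ :=
  (rieszConst d α)⁻¹ * (∫⁻ y, ENNReal.ofReal (‖x - y‖ ^ (α - (d : ℝ))) ∂μ).toReal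

/-- The Morrey norm `‖μ‖_{ℳ^γ} = sup_{x, r>0} μ(B(x,r))/r^γ`. -/
def morreyNorm (d : ℕ) (γ : ℝ) (μ : Measure (Euc d)) : ℝ≥0∞ :=
  ⨆ (x : Euc d) (r : ℝ) (_ : 0 < r), μ (Metric.ball x r) / ENNReal.ofReal (r ^ γ)

/-- The dyadic `BMO^β_*(Q₀)` seminorm, where for each subcube `Q` the dyadic Hausdorff
content adapted to that `Q` is used. -/
def bmoDyadicSeminorm (d : ℕ) (β : ℝ) (Q₀ : Set (Euc d)) (u : Euc d → ℝ) : ℝ≥0∞ :=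
  ⨆ (Q : Cube d) (_ : Q.set ⊆ Q₀),
    ⨅ c : ℝ, choquetIntegral (dyadicContent d β Q) Q.set (fun x => |u x - c|) /
      ENNReal.ofReal (Q.side ^ β)

/-- A (possibly infinite) cube in `ℝ^d`: either a finite cube, or a product of intervals
which are infinite in every coordinate direction. -/
def IsGenCube (d : ℕ) (S : Set (Euc d)) : Prop :=
  (∃ Q : Cube d, S = Q.set) ∨
  (∃ I : Fin d → Set ℝ,
      (∀ i, (∃ a, I i = Set.Ici a) ∨ (∃ b, I i = Set.Iio b) ∨ I i = Set.univ) ∧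
      S = {x : Euc d | ∀ i, x i ∈ I i})

/-- The Choquet integral of an `ℝ≥0∞`-valued function. -/
def choquetIntegralE {X : Type*} (H : Set X → ℝ≥0∞) (f : X → ℝ≥0∞) : ℝ≥0∞ :=
  ∫⁻ t in Set.Ioi (0 : ℝ), H {x | ENNReal.ofReal t < f x}

theorem exponential_decay_iteration (C' cβ : ℝ) (hC' : 1 < C') (hcβ : 1 < cβ)
    (F : ℝ → ℝ) (hF0 : ∀ t : ℝ, 0 < t → 0 ≤ F t)
    (hrec : ∀ s t : ℝ, 1 ≤ s → s ≤ t / cβ → F t ≤ C' * F (t - cβ * s) / s)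
    (hbd : ∀ t : ℝ, 0 < t → F t ≤ 1 / t) :
    ∀ t : ℝ, cβ ≤ t →
      F t ≤ Real.exp (1 / (C' * Real.exp 1) + 1) *
        Real.exp (-(1 / (C' * cβ * Real.exp 1)) * t) := by
  intro t ht
  have e1 : (1:ℝ) < Real.exp 1 := by
    have h := Real.exp_one_gt_d9; linarith
  have hcβ0 : (0:ℝ) < cβ := by linarith
  have hC'0 : (0:ℝ) < C' := by linarith
  set L : ℝ := C' * cβ * Real.exp 1 with hL
  have hLpos : 0 < L := by positivity
  have hCL : 1 / (C' * Real.exp 1) = cβ / L := by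
    rw [hL]; field_simp
  have key : ∀ n : ℕ, ∀ t : ℝ, cβ ≤ t → t < cβ + ((n : ℝ) + 1) * L →
      F t ≤ Real.exp (1 / (C' * Real.exp 1) + 1) * Real.exp (-(t / L)) := by
    intro n
    induction n with
    | zero =>
      intro t ht htl
      have ht0 : 0 < t := lt_of_lt_of_le (by linarith) ht
      have h1 : F t ≤ 1 / t := hbd t ht0
      have h2 : 1 / t ≤ 1 := by
        rw [div_le_one ht0]; linarith
      have h3 : (1:ℝ) ≤ Real.exp (1 / (C' * Real.exp 1) + 1) * Real.exp (-(t / L)) := by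
        rw [← Real.exp_add, Real.one_le_exp_iff, hCL]
        have htl' : t ≤ cβ + L := by push_cast at htl; linarith
        have : t / L ≤ cβ / L + 1 := by
          calc t / L ≤ (cβ + L) / L := by gcongr
            _ = cβ / L + 1 := by rw [add_div, div_self hLpos.ne']
        linarith
      linarith
    | succ n ih =>
      intro t ht htl
      by_cases hcase : t < cβ + ((n : ℝ) + 1) * L
      · exact ih t ht hcase
      push_neg at hcase
      have hs1 : (1:ℝ) ≤ C' * Real.exp 1 := by nlinarith
      have hnL : (0:ℝ) ≤ (n : ℝ) * L := by positivity
      have htL : cβ + L ≤ t := by nlinarith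
      have hs2 : C' * Real.exp 1 ≤ t / cβ := by
        rw [le_div_iff₀ hcβ0]
        nlinarith [hLpos]
      have hrec' := hrec (C' * Real.exp 1) t hs1 hs2
      rw [show cβ * (C' * Real.exp 1) = L from by rw [hL]; ring] at hrec'
      have htm : cβ ≤ t - L := by linarith
      have htm2 : t - L < cβ + ((n : ℝ) + 1) * L := by push_cast at htl; linarith
      have hih := ih (t - L) htm htm2
      have hFnn : 0 ≤ F (t - L) := hF0 _ (by linarith)
      have hexp : Real.exp (-((t - L) / L)) = Real.exp 1 * Real.exp (-(t / L)) := by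
        rw [← Real.exp_add]
        congr 1
        field_simp
        ring
      calc F t ≤ C' * F (t - L) / (C' * Real.exp 1) := hrec'
        _ = F (t - L) / Real.exp 1 := by
            field_simp
        _ ≤ Real.exp (1 / (C' * Real.exp 1) + 1) * Real.exp (-((t - L) / L)) / Real.exp 1 := by
            gcongr
        _ = Real.exp (1 / (C' * Real.exp 1) + 1) * Real.exp (-(t / L)) := by
            rw [hexp]; field_simp
  obtain ⟨n, hn⟩ := exists_nat_gt ((t - cβ) / L)
  have htn : t < cβ + ((n : ℝ) + 1) * L := by
    rw [div_lt_iff₀ hLpos] at hn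
    nlinarith [hLpos]
  have := key n t ht htn
  have heq : -(1 / (C' * cβ * Real.exp 1)) * t = -(t / L) := by
    rw [hL]; field_simp
  rw [heq]
  exact this

end
end

section
/- Let H be an outer measure on ℝ^d which is strongly subadditive and continuous from below. Then the Choquet integral with respect to H satisfies: (1) for every c ≥ 0 and nonnegative f, ∫ c f dH = c ∫ f dH; (2) (monotone convergence) if 0 ≤ f_n is a pointwise nondecreasing sequence converging pointwise to f, then lim_{n→∞} ∫ f_n dH = ∫ f dH; and (3) (countable sublinearity) for any sequence of nonnegative functions f_n, ∫ Σ_{n=1}^∞ f_n dH ≤ Σ_{n=1}^∞ ∫ f_n dH. -/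
open Set MeasureTheory ENNReal NNReal Filter

noncomputable section

/-! Homogeneity is the change of variables `t = c s`, and monotone convergence is continuity from
below applied to each level set `{f > t}`. For subadditivity, strong subadditivity applied to
`{f > t}` and `{f + c > t} ∩ B` gives `∫ (f + c 1_B) dH ≤ ∫ f dH + c H(B)` for an arbitrary
`f`. Adding the layers `h 1_{g ≥ (j+1) h}` one at a time then gives
`∫ (f + (g - h)) dH ≤ ∫ f dH + ∑ⱼ h H{g ≥ (j+1) h} ≤ ∫ f dH + ∫ g dH`,
the last sum being a lower Riemann sum of `t ↦ H{g > t}`; let `h → 0`. -/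

open scoped Topology

section Choquet

variable {X : Type*} {H G : Set X → ℝ≥0∞} {f g : X → ℝ≥0∞}

def IsStronglySubadditive (H : Set X → ℝ≥0∞) : Prop :=
  ∀ E F, H (E ∪ F) + H (E ∩ F) ≤ H E + H F

def IsContinuousFromBelow (H : Set X → ℝ≥0∞) : Prop :=
  ∀ E : ℕ → Set X, Monotone E → Tendsto (fun n => H (E n)) atTop (𝓝 (H (⋃ n, E n)))

lemma measurable_capacity_levelSet (hG : Monotone G) (f : X → ℝ≥0∞) :
    Measurable fun t : ℝ => G {x | ENNReal.ofReal t < f x} :=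
  Antitone.measurable fun _ _ hst => hG fun _ hx => (ENNReal.ofReal_le_ofReal hst).trans_lt hx

lemma choquetIntegralE_mono (hH : Monotone H) (hfg : f ≤ g) :
    choquetIntegralE H f ≤ choquetIntegralE H g :=
  lintegral_mono fun _ => hH fun x hx => lt_of_lt_of_le hx (hfg x)

lemma choquetIntegralE_zero (h0 : H ∅ = 0) : choquetIntegralE H 0 = 0 := by
  simp [choquetIntegralE, h0]

lemma choquetIntegralE_const_mul (h0 : H ∅ = 0) (c : ℝ≥0) (f : X → ℝ≥0∞) :
    choquetIntegralE H (fun x => c * f x) = c * choquetIntegralE H f := by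
  rcases eq_zero_or_pos c with rfl | hc
  · simp only [ENNReal.coe_zero, zero_mul]
    exact choquetIntegralE_zero h0
  have hc' : (0 : ℝ) < c := hc
  have hlevel (t : ℝ) :
      {x | ENNReal.ofReal t < c * f x} = {x | ENNReal.ofReal ((c : ℝ)⁻¹ * t) < f x} := by
    have : ENNReal.ofReal t = c * ENNReal.ofReal ((c : ℝ)⁻¹ * t) := by
      rw [← ENNReal.ofReal_coe_nnreal, ← ENNReal.ofReal_mul hc'.le,
        mul_inv_cancel_left₀ hc'.ne']
    simp only [this, ENNReal.mul_lt_mul_iff_right (ENNReal.coe_ne_zero.2 hc.ne') ENNReal.coe_ne_top]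
  have hscale :
      MeasurePreserving (fun t : ℝ => (c : ℝ)⁻¹ * t) volume (ENNReal.ofReal c • volume) :=
    ⟨measurable_const_mul _, by
      rw [Real.map_volume_mul_left (inv_ne_zero hc'.ne'), inv_inv, abs_of_pos hc']⟩
  have hsubst := hscale.setLIntegral_comp_preimage_emb
    (measurableEmbedding_mulLeft₀ (inv_ne_zero hc'.ne'))
    (fun s => H {x | ENNReal.ofReal s < f x}) (Ioi 0)
  rw [preimage_const_mul_Ioi₀ _ (inv_pos.2 hc'), zero_div] at hsubst
  simp only [choquetIntegralE, hlevel]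
  rw [hsubst, Measure.restrict_smul, lintegral_smul_measure, ENNReal.ofReal_coe_nnreal,
    smul_eq_mul]

lemma tendsto_choquetIntegralE_of_monotone (hH : Monotone H) (hbelow : IsContinuousFromBelow H)
    {f : ℕ → X → ℝ≥0∞} (hf : Monotone f)
    (hfg : ∀ x, Tendsto (fun n => f n x) atTop (𝓝 (g x))) :
    Tendsto (fun n => choquetIntegralE H (f n)) atTop (𝓝 (choquetIntegralE H g)) := by
  have hlevel (t : ℝ) : Monotone fun n => {x | ENNReal.ofReal t < f n x} :=
    fun _ _ hmn x hx => lt_of_lt_of_le hx (hf hmn x)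
  have hunion (t : ℝ) : ⋃ n, {x | ENNReal.ofReal t < f n x} = {x | ENNReal.ofReal t < g x} := by
    ext x
    simp only [mem_iUnion, mem_ofPred_eq,
      tendsto_nhds_unique (hfg x) (tendsto_atTop_iSup fun _ _ h => hf h x), lt_iSup_iff]
  refine lintegral_tendsto_of_tendsto_of_monotone
    (fun n => (measurable_capacity_levelSet hH (f n)).aemeasurable)
    (.of_forall fun t _ _ hmn => hH (hlevel t hmn)) (.of_forall fun t => ?_)
  simpa only [hunion] using hbelow _ (hlevel t)

lemma choquetIntegralE_add_const_le (hG : Monotone G) (f : X → ℝ≥0∞) (c : ℝ≥0) :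
    choquetIntegralE G (fun x => f x + c) ≤ c * G univ + choquetIntegralE G f := by
  have hshift : ∀ t ∈ Ioi (c : ℝ), G {x | ENNReal.ofReal t < f x + c} =
      G {x | ENNReal.ofReal (t - c) < f x} := by
    intro t ht
    have : ENNReal.ofReal t = ENNReal.ofReal (t - c) + c := by
      rw [← ENNReal.ofReal_coe_nnreal, ← ENNReal.ofReal_add (sub_nonneg.2 ht.le) c.coe_nonneg,
        sub_add_cancel]
    simp only [this, ENNReal.add_lt_add_iff_right ENNReal.coe_ne_top]
  have htranslate := (measurePreserving_sub_right volume (c : ℝ)).setLIntegral_comp_preimage_emb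
    (measurableEmbedding_subRight _) (fun s => G {x | ENNReal.ofReal s < f x}) (Ioi 0)
  rw [preimage_sub_const_Ioi, zero_add] at htranslate
  rw [choquetIntegralE, ← Ioc_union_Ioi_eq_Ioi c.coe_nonneg,
    lintegral_union measurableSet_Ioi Ioc_disjoint_Ioi_same,
    setLIntegral_congr_fun measurableSet_Ioi hshift, htranslate]
  refine add_le_add ?_ le_rfl
  calc ∫⁻ t in Ioc 0 (c : ℝ), G {x | ENNReal.ofReal t < f x + c}
      ≤ ∫⁻ _ in Ioc 0 (c : ℝ), G univ := lintegral_mono fun _ => hG (subset_univ _)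
    _ = c * G univ := by
      rw [setLIntegral_const, Real.volume_Ioc, sub_zero, ENNReal.ofReal_coe_nnreal, mul_comm]

lemma choquetIntegralE_add_indicator_le (hH : Monotone H) (hstrong : IsStronglySubadditive H)
    (f : X → ℝ≥0∞) (B : Set X) (c : ℝ≥0) :
    choquetIntegralE H (fun x => f x + B.indicator (fun _ => (c : ℝ≥0∞)) x) ≤
      choquetIntegralE H f + c * H B := by
  set HB : Set X → ℝ≥0∞ := fun E => H (E ∩ B)
  have hHB : Monotone HB := fun _ _ h => hH (inter_subset_inter_left B h)
  by_cases hf : choquetIntegralE H f = ⊤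
  · simp [hf]
  have hlevel (t : ℝ) :
      H {x | ENNReal.ofReal t < f x + B.indicator (fun _ => (c : ℝ≥0∞)) x} +
          HB {x | ENNReal.ofReal t < f x} ≤
        H {x | ENNReal.ofReal t < f x} + HB {x | ENNReal.ofReal t < f x + c} := by
    have hunion : {x | ENNReal.ofReal t < f x + B.indicator (fun _ => (c : ℝ≥0∞)) x} =
        {x | ENNReal.ofReal t < f x} ∪ ({x | ENNReal.ofReal t < f x + c} ∩ B) := by
      ext x
      by_cases hx : x ∈ B
      · simpa [hx] using fun h => h.trans_le le_self_add
      · simp [hx]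
    have hinter : {x | ENNReal.ofReal t < f x} ∩ ({x | ENNReal.ofReal t < f x + c} ∩ B) =
        {x | ENNReal.ofReal t < f x} ∩ B := by
      ext x
      simpa using fun h _ => h.trans_le le_self_add
    have := hstrong {x | ENNReal.ofReal t < f x} ({x | ENNReal.ofReal t < f x + c} ∩ B)
    rwa [hinter, ← hunion] at this
  have hsum : choquetIntegralE H (fun x => f x + B.indicator (fun _ => (c : ℝ≥0∞)) x) +
        choquetIntegralE HB f ≤
      choquetIntegralE H f + choquetIntegralE HB (fun x => f x + c) := by
    simp only [choquetIntegralE]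
    rw [← lintegral_add_right _ (measurable_capacity_levelSet hHB f),
      ← lintegral_add_right _ (measurable_capacity_levelSet hHB _)]
    exact lintegral_mono hlevel
  -- the `HB`-integral of `f` occurs on both sides of `hsum`; it is finite since `∫ f dH` is
  have hfB : choquetIntegralE HB f ≠ ⊤ :=
    ne_top_of_le_ne_top hf (lintegral_mono fun _ => hH inter_subset_left)
  refine (ENNReal.add_le_add_iff_right hfB).1 ?_
  calc _ ≤ _ := hsum
    _ ≤ choquetIntegralE H f + (c * HB univ + choquetIntegralE HB f) :=
      add_le_add le_rfl (choquetIntegralE_add_const_le hHB f c)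
    _ = choquetIntegralE H f + c * H B + choquetIntegralE HB f := by
      rw [show HB univ = H B by simp [HB], add_assoc]

lemma choquetIntegralE_add_tsum_le (hH : Monotone H) (hbelow : IsContinuousFromBelow H)
    (f : X → ℝ≥0∞) (u : ℕ → X → ℝ≥0∞) (a : ℕ → ℝ≥0∞)
    (hu : ∀ j F, choquetIntegralE H (fun x => F x + u j x) ≤ choquetIntegralE H F + a j) :
    choquetIntegralE H (fun x => f x + ∑' j, u j x) ≤ choquetIntegralE H f + ∑' j, a j := by
  have hpartial (N : ℕ) : choquetIntegralE H (fun x => f x + ∑ j ∈ Finset.range N, u j x) ≤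
      choquetIntegralE H f + ∑ j ∈ Finset.range N, a j := by
    induction N with
    | zero => simp
    | succ N ih =>
      simp only [Finset.sum_range_succ, ← add_assoc]
      exact (hu N _).trans (add_le_add ih le_rfl)
  have hlim := tendsto_choquetIntegralE_of_monotone hH hbelow
    (f := fun N x => f x + ∑ j ∈ Finset.range N, u j x)
    (fun _ _ hMN x =>
      add_le_add le_rfl (Finset.sum_le_sum_of_subset (Finset.range_subset_range.2 hMN)))
    (fun x => tendsto_const_nhds.add (ENNReal.tendsto_nat_tsum _))
  exact le_of_tendsto' hlim fun N => (hpartial N).trans (add_le_add le_rfl (ENNReal.sum_le_tsum _))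

lemma tsum_mul_capacity_levelSet_le (hH : Monotone H) (g : X → ℝ≥0∞) (h : ℝ≥0) :
    ∑' j : ℕ, h * H {x | (j + 1) * (h : ℝ≥0∞) ≤ g x} ≤ choquetIntegralE H g := by
  set I : ℕ → Set ℝ := fun j => Ioo ((j : ℝ) * h) ((j + 1 : ℕ) * h)
  have hdisj : Pairwise (Function.onFun Disjoint I) := by
    simpa only [Order.succ_eq_add_one] using Monotone.pairwise_disjoint_on_Ioo_succ
      (f := fun j : ℕ => (j : ℝ) * h)
      fun _ _ hij => mul_le_mul_of_nonneg_right (Nat.cast_le.2 hij) h.coe_nonneg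
  calc ∑' j : ℕ, h * H {x | (j + 1) * (h : ℝ≥0∞) ≤ g x}
      = ∑' j : ℕ, ∫⁻ _ in I j, H {x | (j + 1) * (h : ℝ≥0∞) ≤ g x} := by
        congr 1
        ext j
        rw [setLIntegral_const, Real.volume_Ioo,
          show ((j + 1 : ℕ) : ℝ) * h - j * h = h by push_cast; ring, ENNReal.ofReal_coe_nnreal,
          mul_comm]
    _ ≤ ∑' j : ℕ, ∫⁻ t in I j, H {x | ENNReal.ofReal t < g x} := by
        refine ENNReal.tsum_le_tsum fun j => setLIntegral_mono (measurable_capacity_levelSet hH g)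
          fun t ht => hH fun x (hx : _ ≤ g x) =>
            show ENNReal.ofReal t < g x from lt_of_lt_of_le ?_ hx
        calc ENNReal.ofReal t < ENNReal.ofReal (((j + 1 : ℕ) : ℝ) * h) :=
              ENNReal.ofReal_lt_ofReal_iff'.2
                ⟨ht.2, ((by positivity : (0 : ℝ) ≤ j * h).trans_lt ht.1).trans ht.2⟩
          _ = (j + 1) * (h : ℝ≥0∞) := by
              rw [ENNReal.ofReal_mul (by positivity), ENNReal.ofReal_natCast,
                ENNReal.ofReal_coe_nnreal]
              push_cast
              rfl
    _ = ∫⁻ t in ⋃ j, I j, H {x | ENNReal.ofReal t < g x} :=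
        (lintegral_iUnion (fun _ => measurableSet_Ioo) hdisj _).symm
    _ ≤ choquetIntegralE H g :=
        lintegral_mono_set (iUnion_subset fun j t ht => lt_of_le_of_lt (by positivity) ht.1)

lemma le_tsum_ite_add (a : ℝ≥0∞) {h : ℝ≥0} (hh : 0 < h) :
    a ≤ ∑' j : ℕ, (if (j + 1) * (h : ℝ≥0∞) ≤ a then (h : ℝ≥0∞) else 0) + h := by
  have hh' : (h : ℝ≥0∞) ≠ 0 := ENNReal.coe_ne_zero.2 hh.ne'
  rcases eq_or_ne a ⊤ with rfl | ha
  · simp [ENNReal.tsum_const_eq_top_of_ne_zero hh']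
  classical
  have hex : ∃ K : ℕ, a < (K + 1) * (h : ℝ≥0∞) := by
    obtain ⟨n, hn⟩ := ENNReal.exists_nat_mul_gt hh' ha
    exact ⟨n, hn.trans_le (by gcongr; exact le_self_add)⟩
  have hle (j : ℕ) (hj : j < Nat.find hex) : (j + 1) * (h : ℝ≥0∞) ≤ a :=
    not_lt.1 (Nat.find_min hex hj)
  refine le_of_lt ?_
  calc a < (Nat.find hex + 1) * (h : ℝ≥0∞) := Nat.find_spec hex
    _ = ∑ j ∈ Finset.range (Nat.find hex), (h : ℝ≥0∞) + h := by simp [add_mul]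
    _ = ∑ j ∈ Finset.range (Nat.find hex),
          (if (j + 1) * (h : ℝ≥0∞) ≤ a then (h : ℝ≥0∞) else 0) + h := by
        congr 1
        exact Finset.sum_congr rfl fun j hj => (if_pos (hle j (Finset.mem_range.1 hj))).symm
    _ ≤ _ := add_le_add (ENNReal.sum_le_tsum _) le_rfl

lemma choquetIntegralE_add_tsub_le (hH : Monotone H) (hstrong : IsStronglySubadditive H)
    (hbelow : IsContinuousFromBelow H) (f g : X → ℝ≥0∞) {h : ℝ≥0} (hh : 0 < h) :
    choquetIntegralE H (fun x => f x + (g x - h)) ≤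
      choquetIntegralE H f + choquetIntegralE H g := by
  set B : ℕ → Set X := fun j => {x | (j + 1) * (h : ℝ≥0∞) ≤ g x}
  calc choquetIntegralE H (fun x => f x + (g x - h))
      ≤ choquetIntegralE H
          (fun x => f x + ∑' j, (B j).indicator (fun _ => (h : ℝ≥0∞)) x) :=
        choquetIntegralE_mono hH fun x => add_le_add le_rfl <| tsub_le_iff_right.2 <| by
          simpa only [B, indicator_apply, mem_ofPred_eq] using le_tsum_ite_add (g x) hh
    _ ≤ choquetIntegralE H f + ∑' j, h * H (B j) :=
        choquetIntegralE_add_tsum_le hH hbelow f _ _ fun j F =>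
          choquetIntegralE_add_indicator_le hH hstrong F (B j) h
    _ ≤ choquetIntegralE H f + choquetIntegralE H g :=
        add_le_add le_rfl (tsum_mul_capacity_levelSet_le hH g h)

lemma choquetIntegralE_add_le (hH : Monotone H) (hstrong : IsStronglySubadditive H)
    (hbelow : IsContinuousFromBelow H) (f g : X → ℝ≥0∞) :
    choquetIntegralE H (fun x => f x + g x) ≤ choquetIntegralE H f + choquetIntegralE H g := by
  obtain ⟨h, h_anti, h_pos, h_lim⟩ := exists_seq_strictAnti_tendsto (0 : ℝ≥0)
  have hlim := tendsto_choquetIntegralE_of_monotone hH hbelow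
    (f := fun n x => f x + (g x - h n))
    (fun _ _ hmn x =>
      add_le_add le_rfl (tsub_le_tsub_left (ENNReal.coe_le_coe.2 (h_anti.antitone hmn)) _))
    (fun x => tendsto_const_nhds.add (by
      simpa using ENNReal.Tendsto.sub tendsto_const_nhds (ENNReal.tendsto_coe.2 h_lim)
        (Or.inr ENNReal.zero_ne_top)))
  exact le_of_tendsto' hlim fun n => choquetIntegralE_add_tsub_le hH hstrong hbelow f g (h_pos n)

lemma choquetIntegralE_tsum_le (h0 : H ∅ = 0) (hH : Monotone H)
    (hstrong : IsStronglySubadditive H) (hbelow : IsContinuousFromBelow H)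
    (f : ℕ → X → ℝ≥0∞) :
    choquetIntegralE H (fun x => ∑' n, f n x) ≤ ∑' n, choquetIntegralE H (f n) := by
  simpa [choquetIntegralE_zero h0] using choquetIntegralE_add_tsum_le hH hbelow 0 f _
    fun n F => choquetIntegralE_add_le hH hstrong hbelow F (f n)

end Choquet

theorem choquet_integral_properties_general (d : ℕ) (H : Set (Euc d) → ℝ≥0∞)
    (h0 : H ∅ = 0) (hmono : ∀ E F : Set (Euc d), E ⊆ F → H E ≤ H F)
    (hstrong : ∀ E F : Set (Euc d), H (E ∪ F) + H (E ∩ F) ≤ H E + H F)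
    (hbelow : ∀ E : ℕ → Set (Euc d), Monotone E →
      Filter.Tendsto (fun n => H (E n)) Filter.atTop (nhds (H (⋃ n, E n)))) :
    (∀ c : ℝ, 0 ≤ c → ∀ f : Euc d → ℝ≥0∞,
        choquetIntegralE H (fun x => ENNReal.ofReal c * f x) =
          ENNReal.ofReal c * choquetIntegralE H f) ∧
    (∀ (f : ℕ → Euc d → ℝ≥0∞) (g : Euc d → ℝ≥0∞),
        (∀ x, Monotone fun n => f n x) →
        (∀ x, Filter.Tendsto (fun n => f n x) Filter.atTop (nhds (g x))) →
        Filter.Tendsto (fun n => choquetIntegralE H (f n)) Filter.atTop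
          (nhds (choquetIntegralE H g))) ∧
    (∀ f : ℕ → Euc d → ℝ≥0∞,
        choquetIntegralE H (fun x => ∑' n, f n x) ≤ ∑' n, choquetIntegralE H (f n)) := by
  have hH : Monotone H := fun E F => hmono E F
  exact ⟨fun c _ f => choquetIntegralE_const_mul h0 c.toNNReal f,
    fun f g hf hfg =>
      tendsto_choquetIntegralE_of_monotone hH hbelow (fun _ _ hmn x => hf x hmn) hfg,
    choquetIntegralE_tsum_le h0 hH hstrong hbelow⟩

theorem choquet_integral_properties (d : ℕ) (hd : 1 ≤ d) (H : Set (Euc d) → ℝ≥0∞)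
    (h0 : H ∅ = 0) (hmono : ∀ E F : Set (Euc d), E ⊆ F → H E ≤ H F)
    (hsub : ∀ E : ℕ → Set (Euc d), H (⋃ n, E n) ≤ ∑' n, H (E n))
    (hstrong : ∀ E F : Set (Euc d), H (E ∪ F) + H (E ∩ F) ≤ H E + H F)
    (hbelow : ∀ E : ℕ → Set (Euc d), Monotone E →
      Filter.Tendsto (fun n => H (E n)) Filter.atTop (nhds (H (⋃ n, E n)))) :
    (∀ c : ℝ, 0 ≤ c → ∀ f : Euc d → ℝ≥0∞,
        choquetIntegralE H (fun x => ENNReal.ofReal c * f x) =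
          ENNReal.ofReal c * choquetIntegralE H f) ∧
    (∀ (f : ℕ → Euc d → ℝ≥0∞) (g : Euc d → ℝ≥0∞),
        (∀ x, Monotone fun n => f n x) →
        (∀ x, Filter.Tendsto (fun n => f n x) Filter.atTop (nhds (g x))) →
        Filter.Tendsto (fun n => choquetIntegralE H (f n)) Filter.atTop
          (nhds (choquetIntegralE H g))) ∧
    (∀ f : ℕ → Euc d → ℝ≥0∞,
        choquetIntegralE H (fun x => ∑' n, f n x) ≤ ∑' n, choquetIntegralE H (f n)) :=
  choquet_integral_properties_general d H h0 hmono hstrong hbelow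
end
end
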